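/- Let Λ be a finite nonempty zero/one-weighted graph in which every vertex has degree at least 2 (a loop at a vertex contributes 2 to its degree). Suppose that Λ_0 is a forest and that every edge of weight 1 has its two endpoints in distinct connected components of Λ_0. Then Λ_0 has at least two connected components; in particular χ(Λ_0) ≥ 2, where χ denotes the Euler characteristic (number of vertices minus number of edges). (This is the link-level fact showing that, in a complex with no free vertices or edges satisfying the coloring test conditions, every vertex has curvature 2 − χ(lk_0(v)) ≤ 0.) -/

import Mathlib

/-- A combinatorial graph (Serre style): edges come with a fixed-point-free
reversal involution; loops and multiple edges are allowed. -/
structure SGraph where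
  V : Type
  E : Type
  init : E → V
  bar : E → E
  bar_bar : ∀ e, bar (bar e) = e
  bar_ne : ∀ e, bar e ≠ e

namespace SGraph

variable (G : SGraph)

/-- Terminal vertex of an edge. -/
def term (e : G.E) : G.V := G.init (G.bar e)

/-- Consecutive edges of the list match up. -/
def IsChain (l : List G.E) : Prop :=
  List.Chain' (fun e f => G.term e = G.init f) l

/-- A cycle: a nonempty closed edge path. -/
def IsCycle (l : List G.E) : Prop :=
  l ≠ [] ∧ G.IsChain l ∧
    ∀ e f, l.head? = some e → l.getLast? = some f → G.term f = G.init e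

/-- A reduced cycle: no edge is followed (cyclically) by its reverse. -/
def IsReducedCycle (l : List G.E) : Prop :=
  G.IsCycle l ∧ List.Chain' (fun e f => f ≠ G.bar e) l ∧
    ∀ e f, l.head? = some e → l.getLast? = some f → e ≠ G.bar f

/-- A graph is a forest if it contains no reduced cycle. -/
def IsForestGraph : Prop := ∀ l, ¬ G.IsReducedCycle l

/-- A subgraph: a set of vertices and a set of edges, closed under reversal,
with endpoints among the chosen vertices. -/
structure Subgraph (G : SGraph) where
  verts : Set G.V
  edges : Set G.E
  bar_mem : ∀ ⦃e⦄, e ∈ edges → G.bar e ∈ edges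
  init_mem : ∀ ⦃e⦄, e ∈ edges → G.init e ∈ verts

variable {G}

namespace Subgraph

/-- Subgraph containment. -/
def le (H K : Subgraph G) : Prop := H.verts ⊆ K.verts ∧ H.edges ⊆ K.edges

/-- Intersection of two subgraphs. -/
def inter (H K : Subgraph G) : Subgraph G where
  verts := H.verts ∩ K.verts
  edges := H.edges ∩ K.edges
  bar_mem := fun _ he => ⟨H.bar_mem he.1, K.bar_mem he.2⟩
  init_mem := fun _ he => ⟨H.init_mem he.1, K.init_mem he.2⟩

/-- All edges of the list lie in the subgraph. -/
def EdgesIn (H : Subgraph G) (l : List G.E) : Prop := ∀ e ∈ l, e ∈ H.edges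

/-- A reduced cycle contained in the subgraph. -/
def IsReducedCycleIn (H : Subgraph G) (l : List G.E) : Prop :=
  G.IsReducedCycle l ∧ H.EdgesIn l

/-- A subgraph is a forest if it contains no reduced cycle. -/
def IsForest (H : Subgraph G) : Prop := ∀ l, ¬ H.IsReducedCycleIn l

/-- Reachability inside a subgraph by edge paths. -/
inductive Reaches (H : Subgraph G) : G.V → G.V → Prop
  | refl (v : G.V) (hv : v ∈ H.verts) : Reaches H v v
  | step (e : G.E) (he : e ∈ H.edges) {q : G.V} (h : Reaches H (G.term e) q) :
      Reaches H (G.init e) q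

/-- A subgraph is connected if it is nonempty and any two of its vertices are
joined by an edge path in it. -/
def Connected (H : Subgraph G) : Prop :=
  H.verts.Nonempty ∧ ∀ p ∈ H.verts, ∀ q ∈ H.verts, H.Reaches p q

/-- A tree is a connected forest. -/
def IsTree (H : Subgraph G) : Prop := H.IsForest ∧ H.Connected

/-- `C` is a connected component of `H`: its vertices form a reachability class
of `H` and its edges are the induced ones. -/
def IsCompOf (C H : Subgraph G) : Prop :=
  ∃ v ∈ H.verts, C.verts = {w | H.Reaches v w} ∧
    C.edges = {e | e ∈ H.edges ∧ G.init e ∈ C.verts}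

/-- `H` is a forest relative to `H'`: every reduced cycle of `H` is contained
in `H'`. -/
def ForestRel (H H' : Subgraph G) : Prop :=
  ∀ l, H.IsReducedCycleIn l → H'.EdgesIn l

/-- `H` is a strong forest relative to `H'`: a relative forest such that each
component of `H` meets `H'` in an empty or connected subgraph. -/
def StrongForestRel (H H' : Subgraph G) : Prop :=
  H.ForestRel H' ∧
    ∀ C : Subgraph G, C.IsCompOf H → (C.inter H').verts = ∅ ∨ (C.inter H').Connected

/-- Euler characteristic: number of vertices minus number of (geometric)
edges; each geometric edge corresponds to a pair `{e, ē}`. -/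
noncomputable def eulerChar (H : Subgraph G) : ℤ :=
  (H.verts.ncard : ℤ) - ((H.edges.ncard / 2 : ℕ) : ℤ)

/-- A walk in `H` from `p` to `q`, given as its list of traversed edges. -/
def IsWalk (H : Subgraph G) (p q : G.V) (l : List G.E) : Prop :=
  H.EdgesIn l ∧ G.IsChain l ∧
    (∀ e, l.head? = some e → G.init e = p) ∧
    (∀ e, l.getLast? = some e → G.term e = q) ∧
    (l = [] → p = q ∧ p ∈ H.verts)

/-- The weight-0 subgraph of a zero/one-weighted subgraph: all of its vertices
together with its edges of weight 0. -/
def zeroSub (H : Subgraph G) (ω : G.E → ℕ) (hbar : ∀ e, ω (G.bar e) = ω e) :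
    Subgraph G where
  verts := H.verts
  edges := {e | e ∈ H.edges ∧ ω e = 0}
  bar_mem := fun e he => ⟨H.bar_mem he.1, by rw [hbar]; exact he.2⟩
  init_mem := fun _ he => H.init_mem he.1

end Subgraph

/-- The full subgraph of a graph. -/
def full (G : SGraph) : Subgraph G where
  verts := Set.univ
  edges := Set.univ
  bar_mem := fun _ _ => Set.mem_univ _
  init_mem := fun _ _ => Set.mem_univ _

open Classical in
/-- The quotient graph `G/H'` obtained by identifying the subgraph `H'` to a
single vertex `∗` (represented by `none`): its vertices are the vertices of
`G` not in `H'` together with `∗`; its edges are the edges of `G` not in `H'`,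
with endpoints in `H'` replaced by `∗`. -/
noncomputable def quot (G : SGraph) (H' : Subgraph G) : SGraph where
  V := Option {v : G.V // v ∉ H'.verts}
  E := {e : G.E // e ∉ H'.edges}
  init e := if h : G.init e.1 ∈ H'.verts then none else some ⟨G.init e.1, h⟩
  bar e := ⟨G.bar e.1, fun hc => e.2 (by simpa [G.bar_bar] using H'.bar_mem hc)⟩
  bar_bar e := Subtype.ext (G.bar_bar e.1)
  bar_ne e := fun hc => G.bar_ne e.1 (congrArg Subtype.val hc)

end SGraph

/-! If `Λ₀` were connected, no edge could have weight 1, so `Λ₀ = Λ` would be a finite forest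
in which every vertex has degree at least 2. A reduced path in a forest never repeats an edge, so
it has to stop at a leaf, which such a graph does not have. Once `Λ₀` has two components, pruning
leaves one at a time (removing one vertex and one edge each time) shows `χ(Λ₀) ≥ 2`. -/

lemma List.IsChain.of_cons_append_singleton_self {α : Type*} {R : α → α → Prop} {x : α}
    {m : List α} (h : List.IsChain R (x :: m ++ [x])) :
    List.IsChain R (x :: m) ∧
      ∀ e f, (x :: m).head? = some e → (x :: m).getLast? = some f → R f e := by
  obtain ⟨hchain, -, hclose⟩ := List.isChain_append.1 h
  refine ⟨hchain, fun e f he hf => ?_⟩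
  obtain rfl : x = e := by simpa using he
  exact hclose f hf x rfl

namespace SGraph

variable {G : SGraph}

lemma bar_involutive : Function.Involutive G.bar := G.bar_bar

@[simp] lemma term_bar (e : G.E) : G.term (G.bar e) = G.init e := by
  simp [term, G.bar_bar]

namespace Subgraph

variable {H K : Subgraph G}

lemma term_mem {e : G.E} (he : e ∈ H.edges) : G.term e ∈ H.verts :=
  H.init_mem (H.bar_mem he)

namespace Reaches

lemma snoc {p : G.V} {e : G.E} (h : H.Reaches p (G.init e)) (he : e ∈ H.edges) :
    H.Reaches p (G.term e) := by
  generalize hq : G.init e = q at h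
  induction h with
  | refl v _ => exact hq ▸ step e he (refl _ (term_mem he))
  | step f hf _ ih => exact step f hf (ih hq)

lemma symm {p q : G.V} (h : H.Reaches p q) : H.Reaches q p := by
  induction h with
  | refl v hv => exact refl v hv
  | step e he _ ih => exact term_bar e ▸ ih.snoc (H.bar_mem he)

lemma trans {p q r : G.V} (hpq : H.Reaches p q) (hqr : H.Reaches q r) : H.Reaches p r := by
  induction hpq with
  | refl => exact hqr
  | step e he _ ih => exact step e he (ih hqr)

lemma mono (hHK : H.le K) {p q : G.V} (h : H.Reaches p q) : K.Reaches p q := by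
  induction h with
  | refl v hv => exact refl v (hHK.1 hv)
  | step e he _ ih => exact step e (hHK.2 he) ih

end Reaches

def compOf (H : Subgraph G) (v : G.V) : Subgraph G where
  verts := {w | H.Reaches v w}
  edges := {e | e ∈ H.edges ∧ H.Reaches v (G.init e)}
  bar_mem := fun _ he => ⟨H.bar_mem he.1, he.2.snoc he.1⟩
  init_mem := fun _ he => he.2

lemma exists_isCompOf_ne_of_not_reaches {p q : G.V} (hp : p ∈ H.verts) (hq : q ∈ H.verts)
    (hpq : ¬ H.Reaches p q) :
    ∃ C D : Subgraph G, C.IsCompOf H ∧ D.IsCompOf H ∧ C.verts ≠ D.verts := by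
  refine ⟨H.compOf p, H.compOf q, ⟨p, hp, rfl, rfl⟩, ⟨q, hq, rfl, rfl⟩, fun hCD => ?_⟩
  have hp' : p ∈ (H.compOf q).verts := hCD ▸ Reaches.refl p hp
  exact hpq hp'.symm

def IsReducedPathIn (H : Subgraph G) (l : List G.E) : Prop :=
  H.EdgesIn l ∧ G.IsChain l ∧ List.IsChain (fun e f => f ≠ G.bar e) l

lemma isReducedPathIn_singleton {e : G.E} (he : e ∈ H.edges) : H.IsReducedPathIn [e] :=
  ⟨by simpa [EdgesIn] using he, List.isChain_singleton _, List.isChain_singleton _⟩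

lemma IsReducedPathIn.concat {l : List G.E} {f e : G.E} (hl : H.IsReducedPathIn (l ++ [f]))
    (he : e ∈ H.edges) (hfe : G.term f = G.init e) (hne : e ≠ G.bar f) :
    H.IsReducedPathIn (l ++ [f] ++ [e]) := by
  obtain ⟨hin, hchain, hred⟩ := hl
  refine ⟨fun x hx => ?_, hchain.append (List.isChain_singleton _) ?_,
    hred.append (List.isChain_singleton _) ?_⟩
  · rcases List.mem_append.1 hx with hx | hx
    · exact hin x hx
    · exact List.mem_singleton.1 hx ▸ he
  all_goals simpa

/-- A repeated edge `x ⋯ x` in a reduced path closes up into the reduced cycle `x ⋯`. -/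
lemma IsReducedPathIn.nodup (hH : H.IsForest) {l : List G.E} (hl : H.IsReducedPathIn l) :
    l.Nodup := by
  by_contra hnd
  obtain ⟨x, hx⟩ : ∃ x, List.Sublist [x, x] l := by simpa [List.nodup_iff_sublist] using hnd
  obtain ⟨r₁, r₂, rfl, hx₁, hx₂⟩ := List.cons_sublist_iff.1 hx
  obtain ⟨a, b, rfl⟩ := List.append_of_mem hx₁
  obtain ⟨c, d, rfl⟩ := List.append_of_mem (List.singleton_sublist.1 hx₂)
  have hinfix : x :: (b ++ c) ++ [x] <:+: a ++ x :: b ++ (c ++ x :: d) := ⟨a, d, by simp⟩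
  obtain ⟨hin, hchain, hred⟩ := hl
  obtain ⟨hchain', hclose⟩ := (hchain.infix hinfix).of_cons_append_singleton_self
  obtain ⟨hred', hclose'⟩ := (hred.infix hinfix).of_cons_append_singleton_self
  exact hH _ ⟨⟨⟨by simp, hchain', hclose⟩, hred', hclose'⟩,
    fun e he => hin e (hinfix.subset (List.mem_append_left _ he))⟩

lemma IsForest.mono (hH : H.IsForest) (hKH : K.edges ⊆ H.edges) : K.IsForest :=
  fun l hl => hH l ⟨hl.1, fun e he => hKH (hl.2 e he)⟩

lemma IsForest.init_ne_term (hH : H.IsForest) {f : G.E} (hf : f ∈ H.edges) :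
    G.init f ≠ G.term f := fun hloop =>
  hH [f] ⟨⟨⟨by simp, List.isChain_singleton _, by simp [hloop]⟩, List.isChain_singleton _,
    by simpa using (G.bar_ne f).symm⟩, by simpa [EdgesIn] using hf⟩

/-- Without a leaf, reduced paths could be extended forever, but they cannot repeat an edge. -/
lemma IsForest.exists_leaf [Finite G.E] (hH : H.IsForest) (hne : H.edges.Nonempty) :
    ∃ f ∈ H.edges, ∀ e ∈ H.edges, G.init e = G.term f → e = G.bar f := by
  by_contra! hext
  have hlong : ∀ n : ℕ, ∃ l f, H.IsReducedPathIn (l ++ [f]) ∧ l.length = n := by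
    intro n
    induction n with
    | zero =>
      obtain ⟨f, hf⟩ := hne
      exact ⟨[], f, isReducedPathIn_singleton hf, rfl⟩
    | succ n ih =>
      obtain ⟨l, f, hl, hlen⟩ := ih
      obtain ⟨e, he, hfe, hne⟩ := hext f (hl.1 f (by simp))
      exact ⟨l ++ [f], e, hl.concat he hfe.symm hne, by simp [hlen]⟩
  have := Fintype.ofFinite G.E
  obtain ⟨l, f, hl, hlen⟩ := hlong (Fintype.card G.E)
  have := (hl.nodup hH).length_le_card
  simp only [List.length_append, List.length_singleton] at this
  omega

def deleteLeaf (H : Subgraph G) (f : G.E)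
    (hleaf : ∀ e ∈ H.edges, G.init e = G.term f → e = G.bar f) : Subgraph G where
  verts := H.verts \ {G.term f}
  edges := H.edges \ {f, G.bar f}
  bar_mem := by
    rintro e ⟨he, hef⟩
    refine ⟨H.bar_mem he, ?_⟩
    simp only [Set.mem_insert_iff, Set.mem_singleton_iff, bar_involutive.eq_iff, G.bar_bar]
      at hef ⊢
    tauto
  init_mem := fun e ⟨he, hef⟩ =>
    ⟨H.init_mem he, fun hterm => hef (Or.inr (hleaf e he hterm))⟩

section deleteLeaf

variable {f : G.E} (hleaf : ∀ e ∈ H.edges, G.init e = G.term f → e = G.bar f)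

lemma deleteLeaf_le : (H.deleteLeaf f hleaf).le H :=
  ⟨Set.sdiff_subset, Set.sdiff_subset⟩

lemma ncard_verts_deleteLeaf [Finite G.V] (hf : f ∈ H.edges) :
    (H.deleteLeaf f hleaf).verts.ncard = H.verts.ncard - 1 :=
  Set.ncard_sdiff_singleton_of_mem (term_mem hf)

lemma ncard_edges_deleteLeaf [Finite G.E] (hf : f ∈ H.edges) :
    (H.deleteLeaf f hleaf).edges.ncard = H.edges.ncard - 2 := by
  have hpair : {f, G.bar f} ⊆ H.edges := Set.insert_subset hf (by simpa using H.bar_mem hf)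
  rw [deleteLeaf, Set.ncard_sdiff hpair, Set.ncard_pair (G.bar_ne f).symm]

/-- The deleted leaf `term f` is reached from `init f`, which survives the deletion. -/
lemma exists_reaches_mem_deleteLeaf (hH : H.IsForest) (hf : f ∈ H.edges) {x : G.V}
    (hx : x ∈ H.verts) :
    ∃ y ∈ (H.deleteLeaf f hleaf).verts, H.Reaches x y := by
  by_cases hxf : x = G.term f
  · refine ⟨G.init f, ⟨H.init_mem hf, hH.init_ne_term hf⟩, ?_⟩
    exact hxf ▸ (Reaches.step f hf (Reaches.refl _ (term_mem hf))).symm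
  · exact ⟨x, ⟨hx, hxf⟩, Reaches.refl x hx⟩

end deleteLeaf

/-- In a finite forest, `#edges = 2 (#vertices - #components)`, counting both orientations. -/
theorem IsForest.ncard_edges_add_four_le [Finite G.V] [Finite G.E] (hH : H.IsForest)
    {p q : G.V} (hp : p ∈ H.verts) (hq : q ∈ H.verts) (hpq : ¬ H.Reaches p q) :
    H.edges.ncard + 4 ≤ 2 * H.verts.ncard := by
  induction hn : H.edges.ncard using Nat.strong_induction_on generalizing H p q with
  | _ n ih =>
  rcases H.edges.eq_empty_or_nonempty with hempty | hne
  · have hpq' : p ≠ q := fun h => hpq (h ▸ Reaches.refl p hp)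
    have := Set.ncard_le_ncard (Set.insert_subset hp (Set.singleton_subset_iff.2 hq))
    rw [Set.ncard_pair hpq'] at this
    simp only [hempty, Set.ncard_empty] at hn
    omega
  obtain ⟨f, hf, hleaf⟩ := hH.exists_leaf hne
  obtain ⟨p', hp', hpp'⟩ := exists_reaches_mem_deleteLeaf hleaf hH hf hp
  obtain ⟨q', hq', hqq'⟩ := exists_reaches_mem_deleteLeaf hleaf hH hf hq
  have hpq' : ¬ (H.deleteLeaf f hleaf).Reaches p' q' := fun h =>
    hpq (hpp'.trans ((h.mono (deleteLeaf_le hleaf)).trans hqq'.symm))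
  have hE := ncard_edges_deleteLeaf hleaf hf
  have hV := ncard_verts_deleteLeaf hleaf hf
  have hE1 := (Set.ncard_pos).2 hne
  have := ih _ (by omega) (hH.mono (deleteLeaf_le hleaf).2) hp' hq' hpq' rfl
  omega

theorem IsForest.two_le_eulerChar [Finite G.V] [Finite G.E] (hH : H.IsForest)
    {p q : G.V} (hp : p ∈ H.verts) (hq : q ∈ H.verts) (hpq : ¬ H.Reaches p q) :
    2 ≤ H.eulerChar := by
  have := hH.ncard_edges_add_four_le hp hq hpq
  unfold eulerChar
  omega

end Subgraph

theorem not_isForest_full_of_two_le_degree [Finite G.E] [Nonempty G.V]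
    (hdeg : ∀ v : G.V, 2 ≤ {e : G.E | G.init e = v}.ncard) : ¬ G.full.IsForest := by
  intro hforest
  obtain ⟨v⟩ := ‹Nonempty G.V›
  obtain ⟨e, -⟩ := Set.nonempty_of_ncard_ne_zero (s := {e : G.E | G.init e = v})
    (by have := hdeg v; omega)
  obtain ⟨f, -, hleaf⟩ := hforest.exists_leaf ⟨e, Set.mem_univ e⟩
  obtain ⟨e', he', hne⟩ := Set.exists_ne_of_one_lt_ncard (hdeg (G.term f)) (G.bar f)
  exact hne (hleaf e' (Set.mem_univ e') he')

end SGraph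

/-- Let `G` be a finite nonempty zero/one-weighted graph in which
every vertex has degree at least 2 (degree = number of darts starting at the
vertex, so a loop contributes 2). If the weight-0 subgraph `Λ₀` is a forest and
every weight-1 edge has its endpoints in distinct components of `Λ₀`, then
`Λ₀` has at least two connected components; in particular `χ(Λ₀) ≥ 2`. -/
theorem zero_graph_has_two_components
    (G : SGraph) [Fintype G.V] [Fintype G.E] [Nonempty G.V]
    (ω : G.E → ℕ) (h01 : ∀ e, ω e = 0 ∨ ω e = 1)
    (hbar : ∀ e, ω (G.bar e) = ω e)
    (hdeg : ∀ v : G.V, 2 ≤ {e : G.E | G.init e = v}.ncard)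
    (hforest : (G.full.zeroSub ω hbar).IsForest)
    (hone : ∀ e : G.E, ω e = 1 →
      ∀ C : SGraph.Subgraph G, C.IsCompOf (G.full.zeroSub ω hbar) →
        G.init e ∈ C.verts → G.term e ∉ C.verts) :
    (∃ C D : SGraph.Subgraph G, C.IsCompOf (G.full.zeroSub ω hbar) ∧
        D.IsCompOf (G.full.zeroSub ω hbar) ∧ C.verts ≠ D.verts) ∧
      2 ≤ (G.full.zeroSub ω hbar).eulerChar := by
  set H := G.full.zeroSub ω hbar
  have hverts (v : G.V) : v ∈ H.verts := Set.mem_univ v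
  obtain ⟨p, q, hpq⟩ : ∃ p q, ¬ H.Reaches p q := by
    by_contra! hconn
    have hzero (e : G.E) : ω e = 0 := (h01 e).resolve_right fun h =>
      hone e h (H.compOf (G.init e)) ⟨_, hverts _, rfl, rfl⟩ (.refl _ (hverts _)) (hconn _ _)
    exact SGraph.not_isForest_full_of_two_le_degree hdeg
      (hforest.mono fun e _ => ⟨Set.mem_univ e, hzero e⟩)
  exact ⟨SGraph.Subgraph.exists_isCompOf_ne_of_not_reaches (hverts p) (hverts q) hpq,
    hforest.two_le_eulerChar (hverts p) (hverts q) hpq⟩
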